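/- arXiv:1203.4139 — 3 statements merged into one kernel-verified Lean document; each statement's English description precedes it below -/
import Mathlib

section
/- Let μ be absolutely continuous with weakly unimodal density and let (q_n)_{n∈ℕ} be the sequence of n-level Gersho quantizers of order r > 1 for μ. Then the distortion per codecell is nonincreasing: D(μ, q_n, r)/n ≥ D(μ, q_{n+1}, r)/(n + 1) for every n ∈ ℕ. -/
open MeasureTheory Set Filter Topology
open scoped ENNReal NNReal

/-- The distortion (quantization error) of order `r` of a quantizer `q` for `μ`,
as an extended nonnegative real: `∫ |x - q x|^r dμ`. -/
noncomputable def distortionE (μ : Measure ℝ) (q : ℝ → ℝ) (r : ℝ) : ℝ≥0∞ :=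
  ∫⁻ x, ENNReal.ofReal (|x - q x| ^ r) ∂μ

/-- The `r`-th moment of `μ` on the set `s` about the point `a`:
`∫_s |x - a|^r dμ`. -/
noncomputable def cellMoment (μ : Measure ℝ) (r : ℝ) (s : Set ℝ) (a : ℝ) : ℝ≥0∞ :=
  ∫⁻ x in s, ENNReal.ofReal (|x - a| ^ r) ∂μ

/-- A (scalar) quantizer: a Borel measurable map `ℝ → ℝ` with countable image. -/
def IsQuantizer (q : ℝ → ℝ) : Prop :=
  Measurable q ∧ (Set.range q).Countable

/-- An `n`-level Gersho quantizer of order `r` for `μ`: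
(G1) exactly `n` codepoints; (G2) every codecell is an interval;
(G3) every codepoint is optimal for its own codecell;
(G4) every codecell contributes `D(μ,q,r)/n` to the distortion. -/
def IsGersho (μ : Measure ℝ) (r : ℝ) (n : ℕ) (q : ℝ → ℝ) : Prop :=
  IsQuantizer q ∧
  (Set.range q).encard = n ∧
  (∀ a ∈ Set.range q, (q ⁻¹' {a}).OrdConnected) ∧
  (∀ a ∈ Set.range q, ∀ b : ℝ, cellMoment μ r (q ⁻¹' {a}) a ≤ cellMoment μ r (q ⁻¹' {a}) b) ∧
  (∀ a ∈ Set.range q, cellMoment μ r (q ⁻¹' {a}) a = distortionE μ q r / (n : ℝ≥0∞))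

/-- The (topological) support of a Borel measure on `ℝ`. -/
def msupp (μ : Measure ℝ) : Set ℝ := {x | ∀ U ∈ nhds x, 0 < μ U}

/-- A probability density `h` is weakly unimodal if it is continuous on its support and
there is `l₀ > 0` such that `{x | h x ≥ l}` is a compact interval for every `l ∈ (0, l₀)`. -/
def WeaklyUnimodal (h : ℝ → ℝ) : Prop :=
  ContinuousOn h (tsupport h) ∧
  ∃ l₀ : ℝ, 0 < l₀ ∧ ∀ l : ℝ, 0 < l → l < l₀ →
    IsCompact {x | l ≤ h x} ∧ ({x | l ≤ h x}).OrdConnected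

/-- The constant `Q(r) = 2^{-r} (1+r)^{-1}`. -/
noncomputable def Qconst (r : ℝ) : ℝ := (2 : ℝ) ^ (-r) * (1 + r)⁻¹

/-- The optimal `n`-th Gersho quantization error for `μ` of order `r`. -/
noncomputable def gershoError (μ : Measure ℝ) (r : ℝ) (n : ℕ) : ℝ :=
  (⨅ q ∈ {q : ℝ → ℝ | IsGersho μ r n q}, distortionE μ q r).toReal

/-- The optimal `n`-th quantization error for `μ` of order `r`. -/
noncomputable def optError (μ : Measure ℝ) (r : ℝ) (n : ℕ) : ℝ :=
  (⨅ q ∈ {q : ℝ → ℝ | IsQuantizer q ∧ (Set.range q).encard ≤ (n : ℕ∞)},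
    distortionE μ q r).toReal

/-- The set `J = (a - b, ∞) ∩ (inf supp μ, sup supp μ)` (endpoints in the extended reals). -/
def Jset (μ : Measure ℝ) (a : EReal) (b : ℝ) : Set ℝ :=
  {z : ℝ | a - (b : EReal) < (z : EReal) ∧
    sInf ((fun t : ℝ => (t : EReal)) '' msupp μ) < (z : EReal) ∧
    (z : EReal) < sSup ((fun t : ℝ => (t : EReal)) '' msupp μ)}

/-- `J_{n,I}`: the codepoints of `q n` whose codecell lies inside `I`. -/
def Jcells (q : ℕ → ℝ → ℝ) (I : Set ℝ) (n : ℕ) : Set ℝ :=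
  {a ∈ Set.range (q n) | (q n) ⁻¹' {a} ⊆ I}

/-!
If `q_{n+1}` has more interval cells than `q_n`, some cell `A` of `q_{n+1}` lies inside a
cell `B` of `q_n`. With `a`, `b` the codepoints of `A` and `B`, (G3) and (G4) give
`D(q_{n+1})/(n+1) = ∫_A |x - a|^r ≤ ∫_A |x - b|^r ≤ ∫_B |x - b|^r = D(q_n)/n`.
-/

section OrdConnectedFibers

variable {α β : Type*}

lemma eq_of_le_of_le_of_fiber_ordConnected [Preorder α] {g : α → β}
    (hg : ∀ c ∈ range g, (g ⁻¹' {c}).OrdConnected) {x y z : α}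
    (hxy : x ≤ y) (hyz : y ≤ z) (hxz : g x = g z) : g y = g x :=
  (hg (g x) ⟨x, rfl⟩).out rfl hxz.symm ⟨hxy, hyz⟩

lemma ne_of_lt_of_fiber_ordConnected [LinearOrder α] {f g : α → β}
    (hf : ∀ c ∈ range f, (f ⁻¹' {c}).OrdConnected)
    (hg : ∀ c ∈ range g, (g ⁻¹' {c}).OrdConnected) {x u v : α}
    (huv : u < v) (hfuv : f u = f v) (hguv : g u ≠ g v) (hxv : x < v) (hfx : f x ≠ f v) :
    g x ≠ g v := by
  intro hgx
  have hxu : x < u := by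
    by_contra! hux
    exact hfx ((eq_of_le_of_le_of_fiber_ordConnected hf hux hxv.le hfuv).trans hfuv)
  exact hguv ((eq_of_le_of_le_of_fiber_ordConnected hg hxu.le huv.le hgx).trans hgx)

theorem exists_fiber_subset_fiber_of_encard_lt [LinearOrder α] {f g : α → β}
    (hf : ∀ c ∈ range f, (f ⁻¹' {c}).OrdConnected)
    (hg : ∀ c ∈ range g, (g ⁻¹' {c}).OrdConnected)
    (hlt : (range g).encard < (range f).encard) :
    ∃ a ∈ range f, ∃ b ∈ range g, f ⁻¹' {a} ⊆ g ⁻¹' {b} := by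
  by_contra! hsplit
  have hwitness : ∀ a ∈ range f, ∃ u v, u < v ∧ f u = a ∧ f v = a ∧ g u ≠ g v := by
    rintro a ⟨x, rfl⟩
    obtain ⟨y, hy, hgy⟩ := not_subset.mp (hsplit (f x) ⟨x, rfl⟩ (g x) ⟨x, rfl⟩)
    rcases lt_trichotomy x y with hxy | rfl | hyx
    · exact ⟨x, y, hxy, rfl, hy, Ne.symm hgy⟩
    · exact absurd rfl hgy
    · exact ⟨y, x, hyx, hy, rfl, hgy⟩
  have : Nonempty α := by
    obtain ⟨-, ⟨x, -⟩⟩ := encard_pos.mp (zero_le.trans_lt hlt)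
    exact ⟨x⟩
  choose! u v huv hu hv hg_ne using hwitness
  -- Equal `g`-values at `v a < v a'` would make the `g`-cell of `v a'` contain `u a'` as well.
  have hinj : InjOn (fun a => g (v a)) (range f) := by
    intro a ha a' ha' hgv
    by_contra hne
    rcases lt_trichotomy (v a) (v a') with hlt' | heq | hlt'
    · refine ne_of_lt_of_fiber_ordConnected hf hg (huv a' ha') ((hu a' ha').trans (hv a' ha').symm)
        (hg_ne a' ha') hlt' ?_ hgv
      rw [hv a ha, hv a' ha']; exact hne
    · exact hne (by rw [← hv a ha, ← hv a' ha', heq])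
    · refine ne_of_lt_of_fiber_ordConnected hf hg (huv a ha) ((hu a ha).trans (hv a ha).symm)
        (hg_ne a ha) hlt' ?_ hgv.symm
      rw [hv a ha, hv a' ha']; exact Ne.symm hne
  exact hlt.not_ge (encard_le_encard_of_injOn (fun a _ => ⟨v a, rfl⟩) hinj)

end OrdConnectedFibers

section Gersho

variable {μ : Measure ℝ} {r : ℝ}

lemma cellMoment_mono_set {s t : Set ℝ} (hst : s ⊆ t) (a : ℝ) :
    cellMoment μ r s a ≤ cellMoment μ r t a :=
  lintegral_mono_set hst

lemma cellMoment_le_moment (s : Set ℝ) :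
    cellMoment μ r s 0 ≤ ∫⁻ x, ENNReal.ofReal (|x| ^ r) ∂μ := by
  simpa only [cellMoment, sub_zero] using setLIntegral_le_lintegral s _

lemma IsGersho.distortionE_div_ne_top {n : ℕ} {q : ℝ → ℝ} (hq : IsGersho μ r n q)
    (hn : 0 < n) (hmom : Integrable (fun x => |x| ^ r) μ) :
    distortionE μ q r / n ≠ ⊤ := by
  obtain ⟨-, hcard, -, hopt, hequal⟩ := hq
  obtain ⟨b, hb⟩ : (range q).Nonempty := by
    rw [← encard_ne_zero, hcard]
    exact_mod_cast hn.ne'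
  refine (lt_of_le_of_lt ?_ hmom.lintegral_lt_top).ne
  calc distortionE μ q r / n = cellMoment μ r (q ⁻¹' {b}) b := (hequal b hb).symm
    _ ≤ cellMoment μ r (q ⁻¹' {b}) 0 := hopt b hb 0
    _ ≤ _ := cellMoment_le_moment _

lemma IsGersho.distortionE_div_le_of_fiber_subset {m n : ℕ} {p q : ℝ → ℝ}
    (hp : IsGersho μ r m p) (hq : IsGersho μ r n q) {a b : ℝ} (ha : a ∈ range p)
    (hb : b ∈ range q) (hsub : p ⁻¹' {a} ⊆ q ⁻¹' {b}) :
    distortionE μ p r / m ≤ distortionE μ q r / n := by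
  obtain ⟨-, -, -, hp_opt, hp_equal⟩ := hp
  obtain ⟨-, -, -, -, hq_equal⟩ := hq
  calc distortionE μ p r / m = cellMoment μ r (p ⁻¹' {a}) a := (hp_equal a ha).symm
    _ ≤ cellMoment μ r (p ⁻¹' {a}) b := hp_opt a ha b
    _ ≤ cellMoment μ r (q ⁻¹' {b}) b := cellMoment_mono_set hsub b
    _ = distortionE μ q r / n := hq_equal b hb

theorem IsGersho.distortionE_div_le_of_lt {m n : ℕ} {p q : ℝ → ℝ}
    (hp : IsGersho μ r m p) (hq : IsGersho μ r n q) (hnm : n < m) :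
    distortionE μ p r / m ≤ distortionE μ q r / n := by
  obtain ⟨a, ha, b, hb, hsub⟩ := exists_fiber_subset_fiber_of_encard_lt hp.2.2.1 hq.2.2.1
    (by rw [hp.2.1, hq.2.1]; exact_mod_cast hnm)
  exact hp.distortionE_div_le_of_fiber_subset hq ha hb hsub

end Gersho

theorem gersho_stmt_7_general (μ : Measure ℝ)
    (r : ℝ) (hmom : Integrable (fun x => |x| ^ r) μ)
    (q : ℕ → ℝ → ℝ) (hq : ∀ n : ℕ, 0 < n → IsGersho μ r n (q n)) :
    ∀ n : ℕ, 0 < n →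
      (distortionE μ (q (n + 1)) r).toReal / ((n : ℝ) + 1) ≤
        (distortionE μ (q n) r).toReal / (n : ℝ) := by
  intro n hn
  have hle := ENNReal.toReal_mono ((hq n hn).distortionE_div_ne_top hn hmom)
    ((hq (n + 1) n.succ_pos).distortionE_div_le_of_lt (hq n hn) n.lt_succ_self)
  rwa [ENNReal.toReal_div, ENNReal.toReal_div, ENNReal.toReal_natCast, ENNReal.toReal_natCast,
    Nat.cast_succ] at hle

theorem gersho_stmt_7 (μ : Measure ℝ) [IsProbabilityMeasure μ]
    (r : ℝ) (hr : 1 < r) (hmom : Integrable (fun x => |x| ^ r) μ)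
    (h : ℝ → ℝ) (hh0 : ∀ x, 0 ≤ h x)
    (hμ : μ = volume.withDensity (fun x => ENNReal.ofReal (h x)))
    (hwu : WeaklyUnimodal h)
    (q : ℕ → ℝ → ℝ) (hq : ∀ n : ℕ, 0 < n → IsGersho μ r n (q n)) :
    ∀ n : ℕ, 0 < n →
      (distortionE μ (q (n + 1)) r).toReal / ((n : ℝ) + 1) ≤
        (distortionE μ (q n) r).toReal / (n : ℝ) :=
  gersho_stmt_7_general μ r hmom q hq
end

section
/- Under the same hypotheses (μ weakly unimodal, r > 1, (q_n) the Gersho quantizer sequence, I ⊆ interior of supp μ compact), there exist n₀ ∈ ℕ and constants A₀, B₀ ∈ (0, ∞) such that for every n ≥ n₀: max{diam(q_n⁻¹(a)) : a ∈ J_{n,I}} ≤ A₀ / n₁^I(n) and min{diam(q_n⁻¹(a)) : a ∈ J_{n,I}} ≥ B₀ / n₁^I(n). -/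
open MeasureTheory Set Filter Topology
open scoped ENNReal NNReal

/-! On `[u, v]` the density is pinched between constants `0 < m ≤ M`: `[u, v]` lies inside the
support, so `h` is positive somewhere on either side of it, and the superlevel sets of a weakly
unimodal density are intervals. A piece of length `d` of a codecell inside `[u, v]` has
`r`-th moment at least `m (d/4)^(r+1)` about any point, and a whole codecell of length `d` inside
`[u, v]` has moment at most `M d^(r+1)` about its codepoint. All codecells carry the same moment
`D/n`, so every such piece is at most `K = 4 (M/m)^(1/(r+1))` times as long as any cell of
`J_{n,I}`. The `n₁` cells of `J_{n,I}` are disjoint subintervals of `[u, v]`, which gives the upper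
bound; together with the at most two cells through `u` and `v` they cover `[u, v]`, which gives the
lower bound. -/

theorem Real.volume_le_ofReal_diam {s : Set ℝ} (hb : Bornology.IsBounded s) :
    volume s ≤ ENNReal.ofReal (Metric.diam s) := by
  rw [Metric.diam, ENNReal.ofReal_toReal hb.ediam_ne_top]
  exact Real.volume_le_diam s

theorem Set.OrdConnected.Ioo_csInf_csSup_subset {s : Set ℝ} (hs : s.OrdConnected)
    (hb : Bornology.IsBounded s) : Ioo (sInf s) (sSup s) ⊆ s := by
  rcases s.eq_empty_or_nonempty with rfl | hne
  · simp
  exact IsConnected.Ioo_csInf_csSup_subset ⟨hne, hs.isPreconnected⟩ hb.bddBelow hb.bddAbove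

theorem Set.OrdConnected.volume_eq_ofReal_diam {s : Set ℝ} (hs : s.OrdConnected)
    (hb : Bornology.IsBounded s) : volume s = ENNReal.ofReal (Metric.diam s) := by
  refine le_antisymm (Real.volume_le_ofReal_diam hb) ?_
  rw [Real.diam_eq hb, ← Real.volume_Ioo]
  exact measure_mono (hs.Ioo_csInf_csSup_subset hb)

theorem Finset.sum_diam_le_of_pairwiseDisjoint {ι : Type*} {u v : ℝ} (huv : u ≤ v)
    (s : Finset ι) {f : ι → Set ℝ} (hf : ∀ i ∈ s, (f i).OrdConnected)
    (hsub : ∀ i ∈ s, f i ⊆ Set.Icc u v) (hdisj : (s : Set ι).PairwiseDisjoint f) :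
    ∑ i ∈ s, Metric.diam (f i) ≤ v - u := by
  have hbdd (i) (hi : i ∈ s) : Bornology.IsBounded (f i) :=
    Metric.isBounded_Icc u v |>.subset (hsub i hi)
  rw [← ENNReal.ofReal_le_ofReal_iff (sub_nonneg.2 huv), ENNReal.ofReal_sum_of_nonneg
    fun i _ => Metric.diam_nonneg, ← Real.volume_Icc]
  calc ∑ i ∈ s, ENNReal.ofReal (Metric.diam (f i))
      = ∑ i ∈ s, volume (f i) :=
        Finset.sum_congr rfl fun i hi => ((hf i hi).volume_eq_ofReal_diam (hbdd i hi)).symm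
    _ = volume (⋃ i ∈ s, f i) :=
        (measure_biUnion_finset hdisj fun i hi => (hf i hi).measurableSet).symm
    _ ≤ volume (Set.Icc u v) := measure_mono (iUnion₂_subset hsub)

theorem sub_le_sum_diam_of_Icc_subset_biUnion {ι : Type*} {u v : ℝ} (s : Finset ι)
    {f : ι → Set ℝ} (hb : ∀ i ∈ s, Bornology.IsBounded (f i))
    (hcover : Icc u v ⊆ ⋃ i ∈ s, f i) :
    v - u ≤ ∑ i ∈ s, Metric.diam (f i) := by
  rw [← ENNReal.ofReal_le_ofReal_iff (Finset.sum_nonneg fun i _ => Metric.diam_nonneg),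
    ENNReal.ofReal_sum_of_nonneg fun i _ => Metric.diam_nonneg, ← Real.volume_Icc]
  calc volume (Icc u v) ≤ volume (⋃ i ∈ s, f i) := measure_mono hcover
    _ ≤ ∑ i ∈ s, volume (f i) := measure_biUnion_finset_le s f
    _ ≤ ∑ i ∈ s, ENNReal.ofReal (Metric.diam (f i)) :=
        Finset.sum_le_sum fun i hi => Real.volume_le_ofReal_diam (hb i hi)

theorem exists_Ioo_subset_forall_le_abs_sub {α β : ℝ} (hαβ : α ≤ β) (a : ℝ) :
    ∃ s, Ioo s (s + (β - α) / 4) ⊆ Ioo α β ∧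
      ∀ x ∈ Ioo s (s + (β - α) / 4), (β - α) / 4 ≤ |x - a| := by
  rcases le_or_gt a ((α + β) / 2) with ha | ha
  · refine ⟨β - (β - α) / 4, fun x hx => ⟨by linarith [hx.1], by linarith [hx.2]⟩,
      fun x hx => le_abs.2 (Or.inl (by linarith [hx.1]))⟩
  · refine ⟨α, fun x hx => ⟨hx.1, by linarith [hx.2]⟩,
      fun x hx => le_abs.2 (Or.inr (by linarith [hx.2]))⟩

theorem le_rpow_inv_mul_of_mul_rpow_le {m M x y p : ℝ} (hm : 0 < m) (hM : 0 ≤ M)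
    (hx : 0 ≤ x) (hy : 0 ≤ y) (hp : 0 < p) (hle : m * x ^ p ≤ M * y ^ p) :
    x ≤ (M / m) ^ p⁻¹ * y := by
  have hMm : 0 ≤ M / m := div_nonneg hM hm.le
  refine (Real.rpow_le_rpow_iff hx (by positivity) hp).1 ?_
  rw [Real.mul_rpow (by positivity) hy, Real.rpow_inv_rpow hMm hp.ne', div_mul_eq_mul_div,
    le_div_iff₀ hm, mul_comm]
  exact hle

section Moment

variable {μ : Measure ℝ} {r c a : ℝ} {s : Set ℝ}

theorem ofReal_rpow_mul_le_cellMoment (hs : MeasurableSet s) (hr : 0 ≤ r) (hc : 0 ≤ c)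
    (hfar : ∀ x ∈ s, c ≤ |x - a|) : ENNReal.ofReal (c ^ r) * μ s ≤ cellMoment μ r s a := by
  rw [← setLIntegral_const]
  exact setLIntegral_mono' hs fun x hx =>
    ENNReal.ofReal_le_ofReal (Real.rpow_le_rpow hc (hfar x hx) hr)

theorem cellMoment_le_ofReal_rpow_mul (hs : MeasurableSet s) (hr : 0 ≤ r)
    (hnear : ∀ x ∈ s, |x - a| ≤ c) : cellMoment μ r s a ≤ ENNReal.ofReal (c ^ r) * μ s := by
  rw [← setLIntegral_const]
  exact setLIntegral_mono' hs fun x hx =>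
    ENNReal.ofReal_le_ofReal (Real.rpow_le_rpow (abs_nonneg _) (hnear x hx) hr)

end Moment

section Density

variable {h : ℝ → ℝ} {s : Set ℝ} {r m M : ℝ}

theorem ofReal_mul_volume_le_withDensity (hs : MeasurableSet s) (hm : ∀ x ∈ s, m ≤ h x) :
    ENNReal.ofReal m * volume s ≤ volume.withDensity (fun x => ENNReal.ofReal (h x)) s := by
  rw [withDensity_apply _ hs, ← setLIntegral_const]
  exact setLIntegral_mono' hs fun x hx => ENNReal.ofReal_le_ofReal (hm x hx)

theorem withDensity_le_ofReal_mul_volume (hs : MeasurableSet s) (hM : ∀ x ∈ s, h x ≤ M) :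
    volume.withDensity (fun x => ENNReal.ofReal (h x)) s ≤ ENNReal.ofReal M * volume s := by
  rw [withDensity_apply _ hs, ← setLIntegral_const]
  exact setLIntegral_mono' hs fun x hx => ENNReal.ofReal_le_ofReal (hM x hx)

theorem exists_pos_of_withDensity_pos (hs : MeasurableSet s)
    (hpos : 0 < volume.withDensity (fun x => ENNReal.ofReal (h x)) s) : ∃ x ∈ s, 0 < h x := by
  by_contra! hneg
  refine hpos.ne' (nonpos_iff_eq_zero.1 ?_)
  rw [withDensity_apply _ hs]
  calc ∫⁻ x in s, ENNReal.ofReal (h x) ≤ ∫⁻ _ in s, 0 :=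
        setLIntegral_mono' hs fun x hx => (ENNReal.ofReal_eq_zero.2 (hneg x hx)).le
    _ = 0 := lintegral_zero

theorem ofReal_mul_rpow_le_cellMoment_withDensity (hr : 0 ≤ r) (hm : 0 ≤ m)
    (hs : s.OrdConnected) (hb : Bornology.IsBounded s) (hms : ∀ x ∈ s, m ≤ h x) (a : ℝ) :
    ENNReal.ofReal (m * (Metric.diam s / 4) ^ (r + 1)) ≤
      cellMoment (volume.withDensity fun x => ENNReal.ofReal (h x)) r s a := by
  set d := Metric.diam s
  have hd : d = sSup s - sInf s := Real.diam_eq hb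
  obtain ⟨t, hts, hfar⟩ := exists_Ioo_subset_forall_le_abs_sub
    (show sInf s ≤ sSup s by linarith [Metric.diam_nonneg (s := s)]) a
  rw [← hd] at hts hfar
  have hsub : Ioo t (t + d / 4) ⊆ s := hts.trans (hs.Ioo_csInf_csSup_subset hb)
  have hd4 : 0 ≤ d / 4 := by positivity
  calc ENNReal.ofReal (m * (d / 4) ^ (r + 1))
      = ENNReal.ofReal ((d / 4) ^ r) * (ENNReal.ofReal m * volume (Ioo t (t + d / 4))) := by
        rw [Real.volume_Ioo, add_sub_cancel_left, ← ENNReal.ofReal_mul hm,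
          ← ENNReal.ofReal_mul (by positivity), Real.rpow_add_one' hd4 (by linarith)]
        ring_nf
    _ ≤ ENNReal.ofReal ((d / 4) ^ r) *
          volume.withDensity (fun x => ENNReal.ofReal (h x)) (Ioo t (t + d / 4)) :=
        mul_le_mul_right (ofReal_mul_volume_le_withDensity measurableSet_Ioo
          fun x hx => hms x (hsub hx)) _
    _ ≤ cellMoment (volume.withDensity fun x => ENNReal.ofReal (h x)) r (Ioo t (t + d / 4)) a :=
        ofReal_rpow_mul_le_cellMoment measurableSet_Ioo hr hd4 hfar
    _ ≤ cellMoment (volume.withDensity fun x => ENNReal.ofReal (h x)) r s a :=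
        lintegral_mono_set hsub

theorem cellMoment_withDensity_le_ofReal_mul_rpow (hr : 0 ≤ r) (hM : 0 ≤ M)
    (hs : MeasurableSet s) (hb : Bornology.IsBounded s) (hMs : ∀ x ∈ s, h x ≤ M) {a : ℝ}
    (ha : a ∈ s) :
    cellMoment (volume.withDensity fun x => ENNReal.ofReal (h x)) r s a ≤
      ENNReal.ofReal (M * Metric.diam s ^ (r + 1)) := by
  set d := Metric.diam s
  have hd : 0 ≤ d := Metric.diam_nonneg
  calc cellMoment (volume.withDensity fun x => ENNReal.ofReal (h x)) r s a
      ≤ ENNReal.ofReal (d ^ r) * volume.withDensity (fun x => ENNReal.ofReal (h x)) s :=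
        cellMoment_le_ofReal_rpow_mul hs hr fun x hx => by
          rw [← Real.dist_eq]; exact Metric.dist_le_diam_of_mem hb hx ha
    _ ≤ ENNReal.ofReal (d ^ r) * (ENNReal.ofReal M * ENNReal.ofReal d) :=
        mul_le_mul_right ((withDensity_le_ofReal_mul_volume hs hMs).trans
          (mul_le_mul_right (Real.volume_le_ofReal_diam hb) _)) _
    _ = ENNReal.ofReal (M * d ^ (r + 1)) := by
        rw [← ENNReal.ofReal_mul hM, ← ENNReal.ofReal_mul (by positivity),
          Real.rpow_add_one' hd (by linarith)]
        ring_nf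

end Density

section Support

variable {μ : Measure ℝ} {x : ℝ}

theorem measure_Iio_pos_of_mem_interior_msupp (hx : x ∈ interior (msupp μ)) :
    0 < μ (Iio x) := by
  have hnear : ∀ᶠ y in 𝓝[<] x, y ∈ interior (msupp μ) :=
    nhdsWithin_le_nhds (isOpen_interior.mem_nhds hx)
  obtain ⟨y, hy, hyx⟩ := (hnear.and self_mem_nhdsWithin).exists
  exact interior_subset hy _ (Iio_mem_nhds hyx)

theorem measure_Ioi_pos_of_mem_interior_msupp (hx : x ∈ interior (msupp μ)) :
    0 < μ (Ioi x) := by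
  have hnear : ∀ᶠ y in 𝓝[>] x, y ∈ interior (msupp μ) :=
    nhdsWithin_le_nhds (isOpen_interior.mem_nhds hx)
  obtain ⟨y, hy, hxy⟩ := (hnear.and self_mem_nhdsWithin).exists
  exact interior_subset hy _ (Ioi_mem_nhds hxy)

end Support

namespace WeaklyUnimodal

variable {h : ℝ → ℝ}

theorem exists_pos_forall_Icc_le (hwu : WeaklyUnimodal h) {w w' : ℝ} (hw : 0 < h w)
    (hw' : 0 < h w') :
    ∃ l, 0 < l ∧ ∀ x ∈ Icc w w', l ≤ h x := by
  obtain ⟨l₀, hl₀, hlevel⟩ := hwu.2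
  set l := min (min (h w) (h w')) (l₀ / 2)
  have hl : 0 < l := lt_min (lt_min hw hw') (half_pos hl₀)
  have hconn := (hlevel l hl ((min_le_right _ _).trans_lt (half_lt_self hl₀))).2
  have hlw : l ≤ h w := (min_le_left _ _).trans (min_le_left _ _)
  have hlw' : l ≤ h w' := (min_le_left _ _).trans (min_le_right _ _)
  exact ⟨l, hl, fun x hx => hconn.out hlw hlw' hx⟩

theorem exists_bounds_on_Icc (hwu : WeaklyUnimodal h) {u v : ℝ} (huv : u ≤ v)
    (hI : Icc u v ⊆ interior (msupp (volume.withDensity fun x => ENNReal.ofReal (h x)))) :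
    ∃ m M, 0 < m ∧ m ≤ M ∧ (∀ x ∈ Icc u v, m ≤ h x) ∧ ∀ x ∈ Icc u v, h x ≤ M := by
  obtain ⟨w, hw_lt, hw⟩ := exists_pos_of_withDensity_pos measurableSet_Iio
    (measure_Iio_pos_of_mem_interior_msupp (hI (left_mem_Icc.2 huv)))
  obtain ⟨w', hw'_gt, hw'⟩ := exists_pos_of_withDensity_pos measurableSet_Ioi
    (measure_Ioi_pos_of_mem_interior_msupp (hI (right_mem_Icc.2 huv)))
  obtain ⟨m, hm, hmh⟩ := hwu.exists_pos_forall_Icc_le hw hw'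
  have hlow : ∀ x ∈ Icc u v, m ≤ h x := fun x hx =>
    hmh x ⟨hw_lt.le.trans hx.1, hx.2.trans hw'_gt.le⟩
  have hsupp : Icc u v ⊆ tsupport h := fun x hx =>
    subset_tsupport h (hm.trans_le (hlow x hx)).ne'
  obtain ⟨x₀, hx₀, hmax⟩ :=
    isCompact_Icc.exists_isMaxOn (nonempty_Icc.2 huv) (hwu.1.mono hsupp)
  exact ⟨m, h x₀, hm, hlow x₀ hx₀, hlow, fun x hx => hmax hx⟩

end WeaklyUnimodal

theorem IsGersho.diam_le_mul_diam {h : ℝ → ℝ} {r : ℝ} {n : ℕ} {q : ℝ → ℝ}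
    (hq : IsGersho (volume.withDensity fun x => ENNReal.ofReal (h x)) r n q) (hr : 0 ≤ r)
    {m M : ℝ} (hm : 0 < m) (hM : 0 ≤ M) {S : Set ℝ} (hS : S.OrdConnected)
    (hSb : Bornology.IsBounded S) (hmS : ∀ x ∈ S, m ≤ h x) {c : ℝ} (hc : c ∈ range q)
    (hSc : S ⊆ q ⁻¹' {c}) {b : ℝ} (hb : b ∈ range q) (hbb : Bornology.IsBounded (q ⁻¹' {b}))
    (hMb : ∀ x ∈ q ⁻¹' {b}, h x ≤ M) :
    Metric.diam S ≤ 4 * (M / m) ^ (r + 1)⁻¹ * Metric.diam (q ⁻¹' {b}) := by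
  obtain ⟨⟨hmeas, -⟩, -, -, hopt, hequal⟩ := hq
  obtain ⟨x, rfl⟩ := hb
  have hmoment : ENNReal.ofReal (m * (Metric.diam S / 4) ^ (r + 1)) ≤
      ENNReal.ofReal (M * Metric.diam (q ⁻¹' {q x}) ^ (r + 1)) :=
    calc ENNReal.ofReal (m * (Metric.diam S / 4) ^ (r + 1))
        ≤ cellMoment _ r S c := ofReal_mul_rpow_le_cellMoment_withDensity hr hm.le hS hSb hmS c
      _ ≤ cellMoment _ r (q ⁻¹' {c}) c := lintegral_mono_set hSc
      _ = cellMoment _ r (q ⁻¹' {q x}) (q x) := (hequal c hc).trans (hequal _ ⟨x, rfl⟩).symm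
      _ ≤ cellMoment _ r (q ⁻¹' {q x}) x := hopt _ ⟨x, rfl⟩ x
      _ ≤ _ := cellMoment_withDensity_le_ofReal_mul_rpow hr hM
          (hmeas (measurableSet_singleton _)) hbb hMb rfl
  rw [ENNReal.ofReal_le_ofReal_iff (by positivity)] at hmoment
  have := le_rpow_inv_mul_of_mul_rpow_le hm hM (by positivity) Metric.diam_nonneg
    (by linarith) hmoment
  linarith

section Jcells

variable {q : ℕ → ℝ → ℝ} {n : ℕ} {u v : ℝ}

theorem mem_Jcells_or_eq_of_mem_Icc (hconn : ∀ a ∈ range (q n), (q n ⁻¹' {a}).OrdConnected)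
    {x : ℝ} (hx : x ∈ Icc u v) :
    q n x ∈ Jcells q (Icc u v) n ∨ q n x = q n u ∨ q n x = q n v := by
  by_cases hsub : q n ⁻¹' {q n x} ⊆ Icc u v
  · exact Or.inl ⟨⟨x, rfl⟩, hsub⟩
  obtain ⟨y, hy, hyI⟩ := not_subset.1 hsub
  have hcell := hconn _ ⟨x, rfl⟩
  rcases lt_or_ge y u with hyu | huy
  · exact Or.inr (Or.inl (hcell.out hy rfl ⟨hyu.le, hx.1⟩).symm)
  · have hvy : v < y := lt_of_not_ge fun hyv => hyI ⟨huy, hyv⟩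
    exact Or.inr (Or.inr (hcell.out rfl hy ⟨hx.2, hvy.le⟩).symm)

theorem ncard_Jcells_mul_diam_le (huv : u ≤ v)
    (hconn : ∀ a ∈ range (q n), (q n ⁻¹' {a}).OrdConnected)
    (hfin : (Jcells q (Icc u v) n).Finite) {K : ℝ} (hK : 0 ≤ K)
    (hcmp : ∀ b ∈ Jcells q (Icc u v) n, ∀ b' ∈ Jcells q (Icc u v) n,
      Metric.diam (q n ⁻¹' {b}) ≤ K * Metric.diam (q n ⁻¹' {b'}))
    {a : ℝ} (ha : a ∈ Jcells q (Icc u v) n) :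
    ((Jcells q (Icc u v) n).ncard : ℝ) * Metric.diam (q n ⁻¹' {a}) ≤ K * (v - u) := by
  have hmem (b) : b ∈ hfin.toFinset ↔ b ∈ Jcells q (Icc u v) n := hfin.mem_toFinset
  rw [Set.ncard_eq_toFinset_card _ hfin]
  calc (hfin.toFinset.card : ℝ) * Metric.diam (q n ⁻¹' {a})
      = ∑ _b ∈ hfin.toFinset, Metric.diam (q n ⁻¹' {a}) := by
        rw [Finset.sum_const, nsmul_eq_mul]
    _ ≤ ∑ b ∈ hfin.toFinset, K * Metric.diam (q n ⁻¹' {b}) :=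
        Finset.sum_le_sum fun b hb => hcmp a ha b ((hmem b).1 hb)
    _ = K * ∑ b ∈ hfin.toFinset, Metric.diam (q n ⁻¹' {b}) := (Finset.mul_sum _ _ _).symm
    _ ≤ K * (v - u) := mul_le_mul_of_nonneg_left
        (Finset.sum_diam_le_of_pairwiseDisjoint huv _
          (fun b hb => hconn b ((hmem b).1 hb).1) (fun b hb => ((hmem b).1 hb).2)
          (pairwiseDisjoint_fiber _ _)) hK

theorem sub_le_ncard_Jcells_add_two_mul
    (hconn : ∀ a ∈ range (q n), (q n ⁻¹' {a}).OrdConnected)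
    (hfin : (Jcells q (Icc u v) n).Finite) {L : ℝ} (hL : 0 ≤ L)
    (hpiece : ∀ c ∈ range (q n), Metric.diam (q n ⁻¹' {c} ∩ Icc u v) ≤ L) :
    v - u ≤ ((Jcells q (Icc u v) n).ncard + 2) * L := by
  set T := insert (q n u) (insert (q n v) hfin.toFinset)
  have hcover : Icc u v ⊆ ⋃ c ∈ T, q n ⁻¹' {c} ∩ Icc u v := fun x hx => by
    refine mem_iUnion₂.2 ⟨q n x, ?_, rfl, hx⟩
    rcases mem_Jcells_or_eq_of_mem_Icc hconn hx with hJ | hu | hv <;> simp [T, *]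
  have hrange : ∀ c ∈ T, c ∈ range (q n) := by
    simp only [T, Finset.mem_insert, Set.Finite.mem_toFinset]
    rintro c (rfl | rfl | hc)
    exacts [⟨u, rfl⟩, ⟨v, rfl⟩, hc.1]
  have hcard : (T.card : ℝ) ≤ hfin.toFinset.card + 2 := by
    exact_mod_cast (Finset.card_insert_le _ _).trans (Nat.succ_le_succ (Finset.card_insert_le _ _))
  calc v - u ≤ ∑ c ∈ T, Metric.diam (q n ⁻¹' {c} ∩ Icc u v) :=
        sub_le_sum_diam_of_Icc_subset_biUnion T
          (fun c _ => (Metric.isBounded_Icc u v).subset inter_subset_right) hcover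
    _ ≤ ∑ _c ∈ T, L := Finset.sum_le_sum fun c hc => hpiece c (hrange c hc)
    _ = T.card * L := by rw [Finset.sum_const, nsmul_eq_mul]
    _ ≤ ((Jcells q (Icc u v) n).ncard + 2) * L := by
        rw [Set.ncard_eq_toFinset_card _ hfin]
        exact mul_le_mul_of_nonneg_right hcard hL

end Jcells

theorem gersho_stmt_11_general (μ : Measure ℝ)
    (r : ℝ) (hr : 1 < r)
    (h : ℝ → ℝ)
    (hμ : μ = volume.withDensity (fun x => ENNReal.ofReal (h x)))
    (hwu : WeaklyUnimodal h)
    (q : ℕ → ℝ → ℝ) (hq : ∀ n : ℕ, 0 < n → IsGersho μ r n (q n))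
    (u v : ℝ) (huv : u < v) (hI : Set.Icc u v ⊆ interior (msupp μ)) :
    ∃ n₀ : ℕ, ∃ A₀ B₀ : ℝ, 0 < A₀ ∧ 0 < B₀ ∧
      ∀ n ≥ n₀, ∀ a ∈ Jcells q (Set.Icc u v) n,
        Metric.diam ((q n) ⁻¹' {a}) ≤ A₀ / ((Jcells q (Set.Icc u v) n).ncard : ℝ) ∧
        B₀ / ((Jcells q (Set.Icc u v) n).ncard : ℝ) ≤ Metric.diam ((q n) ⁻¹' {a}) := by
  subst hμ
  obtain ⟨m, M, hm, hmM, hmh, hhM⟩ := hwu.exists_bounds_on_Icc huv.le hI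
  set K := 4 * (M / m) ^ (r + 1)⁻¹
  have hK : 0 < K := by have := hm.trans_le hmM; positivity
  refine ⟨1, K * (v - u), (v - u) / (3 * K), by nlinarith, by positivity, fun n hn a ha => ?_⟩
  have hG := hq n hn
  have hconn := hG.2.2.1
  set J := Jcells q (Icc u v) n
  have hfin : J.Finite := (finite_of_encard_eq_coe hG.2.1).subset fun b hb => hb.1
  have hpiece (c) (hc : c ∈ range (q n)) (b) (hb : b ∈ J) :
      Metric.diam (q n ⁻¹' {c} ∩ Icc u v) ≤ K * Metric.diam (q n ⁻¹' {b}) :=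
    hG.diam_le_mul_diam (by linarith) hm (hm.le.trans hmM)
      ((hconn c hc).inter ordConnected_Icc) ((Metric.isBounded_Icc u v).subset
        inter_subset_right) (fun x hx => hmh x hx.2) hc inter_subset_left hb.1
      ((Metric.isBounded_Icc u v).subset hb.2) (fun x hx => hhM x (hb.2 hx))
  have hcell (b) (hb : b ∈ J) (b') (hb' : b' ∈ J) :
      Metric.diam (q n ⁻¹' {b}) ≤ K * Metric.diam (q n ⁻¹' {b'}) := by
    simpa only [inter_eq_left.2 hb.2] using hpiece b hb.1 b' hb'
  have hN : (1 : ℝ) ≤ J.ncard := by exact_mod_cast (ncard_pos hfin).2 ⟨a, ha⟩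
  have hupper := ncard_Jcells_mul_diam_le huv.le hconn hfin hK.le hcell ha
  have hlower := sub_le_ncard_Jcells_add_two_mul hconn hfin
    (mul_nonneg hK.le Metric.diam_nonneg) (fun c hc => hpiece c hc a ha)
  have hDa : 0 ≤ Metric.diam (q n ⁻¹' {a}) := Metric.diam_nonneg
  constructor
  · rw [le_div_iff₀ (by linarith)]; linarith
  · rw [div_div, div_le_iff₀ (by positivity)]; nlinarith

theorem gersho_stmt_11 (μ : Measure ℝ) [IsProbabilityMeasure μ]
    (r : ℝ) (hr : 1 < r) (hmom : Integrable (fun x => |x| ^ r) μ)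
    (h : ℝ → ℝ) (hh0 : ∀ x, 0 ≤ h x)
    (hμ : μ = volume.withDensity (fun x => ENNReal.ofReal (h x)))
    (hwu : WeaklyUnimodal h)
    (q : ℕ → ℝ → ℝ) (hq : ∀ n : ℕ, 0 < n → IsGersho μ r n (q n))
    (u v : ℝ) (huv : u < v) (hI : Set.Icc u v ⊆ interior (msupp μ)) :
    ∃ n₀ : ℕ, ∃ A₀ B₀ : ℝ, 0 < A₀ ∧ 0 < B₀ ∧
      ∀ n ≥ n₀, ∀ a ∈ Jcells q (Set.Icc u v) n,
        Metric.diam ((q n) ⁻¹' {a}) ≤ A₀ / ((Jcells q (Set.Icc u v) n).ncard : ℝ) ∧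
        B₀ / ((Jcells q (Set.Icc u v) n).ncard : ℝ) ≤ Metric.diam ((q n) ⁻¹' {a}) :=
  gersho_stmt_11_general μ r hr h hμ hwu q hq u v huv hI
end

section
/- Under the same hypotheses (μ weakly unimodal, r > 1, (q_n) the Gersho quantizer sequence, I ⊆ interior of supp μ compact), the number n₁^I(n) of codecells of q_n contained in I tends to infinity as n → ∞. -/
open MeasureTheory Set Filter Topology
open scoped ENNReal NNReal

/-!
Summing the optimality inequalities over the `n` cells shows that each cell of `q n` has `r`-th
moment about its codepoint at most `∫ |x - u|^r dμ / n`. By Markov's inequality, all but a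
vanishing part of the cell's mass then lies in a ball of any fixed radius `ρ` around the codepoint,
and such balls have mass `O(ρ)` because the density is bounded. So the largest cell mass tends to
`0`, and the number of cells meeting `(u, v)`, which cover a set of positive mass, tends to
infinity. Cells are intervals, so at most two of those (the ones containing `u` or `v`) fail to
lie inside `[u, v]`.
-/

lemma integrable_abs_sub_rpow {μ : Measure ℝ} [IsFiniteMeasure μ] {r : ℝ} (hr : 0 < r)
    (hmom : Integrable (fun x => |x| ^ r) μ) (b : ℝ) :
    Integrable (fun x => |x - b| ^ r) μ := by
  have hp : ENNReal.ofReal r ≠ 0 := by simpa using hr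
  have hid : MemLp id (ENNReal.ofReal r) μ :=
    (integrable_norm_rpow_iff aestronglyMeasurable_id hp ENNReal.ofReal_ne_top).1
      (by simpa [ENNReal.toReal_ofReal hr.le] using hmom)
  simpa [ENNReal.toReal_ofReal hr.le] using
    (hid.sub (memLp_const b)).integrable_norm_rpow hp ENNReal.ofReal_ne_top

lemma WeaklyUnimodal.bddAbove_range {h : ℝ → ℝ} (hwu : WeaklyUnimodal h) :
    BddAbove (range h) := by
  obtain ⟨hcont, l₀, hl₀, hlevel⟩ := hwu
  set K := {x | l₀ / 2 ≤ h x}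
  have hKsupp : K ⊆ tsupport h := fun x hx =>
    subset_tsupport h fun h0 => by simp only [K, mem_ofPred_eq, h0] at hx; linarith
  obtain ⟨M, hM⟩ := ((hlevel _ (by linarith) (by linarith)).1.bddAbove_image (hcont.mono hKsupp))
  refine ⟨max M (l₀ / 2), ?_⟩
  rintro _ ⟨x, rfl⟩
  by_cases hx : x ∈ K
  · exact le_max_of_le_left (hM (mem_image_of_mem h hx))
  · exact le_max_of_le_right (not_le.1 hx).le

lemma exists_pos_forall_withDensity_ball_le {h : ℝ → ℝ} (hh : BddAbove (range h))
    {ε : ℝ≥0∞} (hε : ε ≠ 0) :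
    ∃ ρ > 0, ∀ a, volume.withDensity (fun x => ENNReal.ofReal (h x)) (Metric.ball a ρ) ≤ ε := by
  obtain ⟨M, hM0, hM⟩ := hh.exists_ge 0
  have hcont : Continuous fun ρ : ℝ => ENNReal.ofReal (M * (2 * ρ)) :=
    ENNReal.continuous_ofReal.comp (by fun_prop)
  have hlim : Tendsto (fun ρ : ℝ => ENNReal.ofReal (M * (2 * ρ))) (𝓝[>] 0) (𝓝 0) :=
    tendsto_nhdsWithin_of_tendsto_nhds (by simpa using hcont.tendsto 0)
  obtain ⟨ρ, hρε, hρ⟩ :=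
    ((hlim.eventually (gt_mem_nhds (pos_iff_ne_zero.2 hε))).and self_mem_nhdsWithin).exists
  refine ⟨ρ, hρ, fun a => ?_⟩
  calc volume.withDensity (fun x => ENNReal.ofReal (h x)) (Metric.ball a ρ)
      ≤ ∫⁻ _ in Metric.ball a ρ, ENNReal.ofReal M := by
        rw [withDensity_apply _ measurableSet_ball]
        exact setLIntegral_mono measurable_const
          fun x _ => ENNReal.ofReal_le_ofReal (hM (h x) (mem_range_self x))
    _ = ENNReal.ofReal (M * (2 * ρ)) := by
        rw [setLIntegral_const, Real.volume_ball, ENNReal.ofReal_mul hM0]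
    _ ≤ ε := hρε.le

lemma measure_le_measure_ball_add_cellMoment_div (μ : Measure ℝ) {r : ℝ} (hr : 0 < r)
    (s : Set ℝ) (a : ℝ) {ρ : ℝ} (hρ : 0 < ρ) :
    μ s ≤ μ (Metric.ball a ρ) + cellMoment μ r s a / ENNReal.ofReal (ρ ^ r) := by
  have hfar : s \ Metric.ball a ρ ⊆
      {x | ENNReal.ofReal (ρ ^ r) ≤ ENNReal.ofReal (|x - a| ^ r)} ∩ s := by
    rintro x ⟨hxs, hxb⟩
    refine ⟨ENNReal.ofReal_le_ofReal (Real.rpow_le_rpow hρ.le ?_ hr.le), hxs⟩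
    simpa [Real.dist_eq] using hxb
  have hmarkov := mul_meas_ge_le_lintegral₀ (μ := μ.restrict s)
    (by fun_prop : AEMeasurable (fun x => ENNReal.ofReal (|x - a| ^ r)) _) (ENNReal.ofReal (ρ ^ r))
  calc μ s ≤ μ (s ∩ Metric.ball a ρ) + μ (s \ Metric.ball a ρ) := measure_le_inter_add_sdiff μ s _
    _ ≤ μ (Metric.ball a ρ) + cellMoment μ r s a / ENNReal.ofReal (ρ ^ r) := by
      gcongr
      · exact inter_subset_right
      · rw [ENNReal.le_div_iff_mul_le (by simp [Real.rpow_pos_of_pos hρ]) (by simp), mul_comm]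
        exact le_trans (mul_le_mul_right
          ((measure_mono hfar).trans (Measure.le_restrict_apply _ _)) _) hmarkov

lemma IsGersho.finite_range {μ : Measure ℝ} {r : ℝ} {n : ℕ} {q : ℝ → ℝ}
    (hq : IsGersho μ r n q) : (range q).Finite :=
  finite_of_encard_eq_coe hq.2.1

lemma IsGersho.cellMoment_le_div {μ : Measure ℝ} {r : ℝ} {n : ℕ} {q : ℝ → ℝ}
    (hq : IsGersho μ r n q) (hn : 0 < n) (b : ℝ) {a : ℝ} (ha : a ∈ range q) :
    cellMoment μ r (q ⁻¹' {a}) a ≤ (∫⁻ x, ENNReal.ofReal (|x - b| ^ r) ∂μ) / n := by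
  have hfin := hq.finite_range
  obtain ⟨⟨hmeas, -⟩, hcard, -, hopt, hequal⟩ := hq
  have hcardF : hfin.toFinset.card = n := by
    have := hfin.encard_eq_coe_toFinset_card
    rw [hcard] at this
    exact_mod_cast this.symm
  have hdisj : Set.PairwiseDisjoint (↑hfin.toFinset) (fun c => q ⁻¹' {c}) :=
    fun c _ d _ hcd => disjoint_left.2 fun x hxc hxd => hcd (hxc.symm.trans hxd)
  rw [ENNReal.le_div_iff_mul_le (by simp [hn.ne']) (by simp), mul_comm]
  calc (n : ℝ≥0∞) * cellMoment μ r (q ⁻¹' {a}) a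
      = ∑ c ∈ hfin.toFinset, cellMoment μ r (q ⁻¹' {c}) c := by
        rw [Finset.sum_congr rfl fun c hc => (hequal c (hfin.mem_toFinset.1 hc)).trans
          (hequal a ha).symm, Finset.sum_const, hcardF, nsmul_eq_mul]
    _ ≤ ∑ c ∈ hfin.toFinset, cellMoment μ r (q ⁻¹' {c}) b :=
        Finset.sum_le_sum fun c hc => hopt c (hfin.mem_toFinset.1 hc) b
    _ = ∫⁻ x in ⋃ c ∈ hfin.toFinset, q ⁻¹' {c}, ENNReal.ofReal (|x - b| ^ r) ∂μ :=
        (lintegral_biUnion_finset hdisj (fun c _ => hmeas (measurableSet_singleton c)) _).symm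
    _ ≤ ∫⁻ x, ENNReal.ofReal (|x - b| ^ r) ∂μ := setLIntegral_le_lintegral _ _

lemma IsGersho.eventually_measure_preimage_le {μ : Measure ℝ} {r : ℝ} (hr : 0 < r) {b : ℝ}
    (hb : ∫⁻ x, ENNReal.ofReal (|x - b| ^ r) ∂μ ≠ ∞)
    (hball : ∀ ε ≠ 0, ∃ ρ > 0, ∀ a, μ (Metric.ball a ρ) ≤ ε)
    {q : ℕ → ℝ → ℝ} (hq : ∀ n, 0 < n → IsGersho μ r n (q n)) {ε : ℝ≥0∞} (hε : ε ≠ 0) :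
    ∀ᶠ n in atTop, ∀ a ∈ range (q n), μ (q n ⁻¹' {a}) ≤ ε := by
  obtain ⟨ρ, hρ, hρball⟩ := hball (ε / 2) (by simpa using hε)
  set c := ENNReal.ofReal (ρ ^ r) * (ε / 2)
  have hc : c ≠ 0 := mul_ne_zero (by simp [Real.rpow_pos_of_pos hρ]) (by simpa using hε)
  have hlim : Tendsto (fun n : ℕ => (∫⁻ x, ENNReal.ofReal (|x - b| ^ r) ∂μ) / n) atTop (𝓝 0) := by
    simpa [div_eq_mul_inv] using
      ENNReal.Tendsto.const_mul ENNReal.tendsto_inv_nat_nhds_zero (Or.inr hb)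
  filter_upwards [eventually_gt_atTop 0, (tendsto_order.1 hlim).2 c (pos_iff_ne_zero.2 hc)]
    with n hn hsmall a ha
  calc μ (q n ⁻¹' {a})
      ≤ μ (Metric.ball a ρ) + cellMoment μ r (q n ⁻¹' {a}) a / ENNReal.ofReal (ρ ^ r) :=
        measure_le_measure_ball_add_cellMoment_div μ hr _ a hρ
    _ ≤ ε / 2 + ε / 2 := add_le_add (hρball a)
        (ENNReal.div_le_of_le_mul' (((hq n hn).cellMoment_le_div hn b ha).trans hsmall.le))
    _ = ε := ENNReal.add_halves ε

lemma tendsto_ncard_image_atTop {α β : Type*} [MeasurableSpace α] {μ : Measure α}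
    {f : ℕ → α → β} {s : Set α} (hs₀ : μ s ≠ 0) (hs : μ s ≠ ∞)
    (hfin : ∀ᶠ n in atTop, (range (f n)).Finite)
    (hsmall : ∀ ε ≠ 0, ∀ᶠ n in atTop, ∀ b ∈ range (f n), μ (f n ⁻¹' {b}) ≤ ε) :
    Tendsto (fun n => (f n '' s).ncard) atTop atTop := by
  refine tendsto_atTop.2 fun N => ?_
  have hT : ((N + 1 : ℕ) : ℝ≥0∞) ≠ 0 := by simp
  filter_upwards [hfin, hsmall (μ s / (N + 1 : ℕ)) (by simp [hs₀])] with n hn hsmall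
  have hK := hn.subset (image_subset_range (f n) s)
  have hcover : μ s ≤ (f n '' s).ncard * (μ s / (N + 1 : ℕ)) := by
    calc μ s ≤ μ (⋃ b ∈ hK.toFinset, f n ⁻¹' {b}) :=
          measure_mono fun x hx => mem_biUnion (hK.mem_toFinset.2 (mem_image_of_mem _ hx)) rfl
      _ ≤ ∑ b ∈ hK.toFinset, μ (f n ⁻¹' {b}) := measure_biUnion_finset_le _ _
      _ ≤ ∑ _b ∈ hK.toFinset, μ s / (N + 1 : ℕ) :=
          Finset.sum_le_sum fun b hb => hsmall b (image_subset_range _ _ (hK.mem_toFinset.1 hb))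
      _ = (f n '' s).ncard * (μ s / (N + 1 : ℕ)) := by
          rw [Finset.sum_const, nsmul_eq_mul, ncard_eq_toFinset_card _ hK]
  rw [← mul_div_assoc, ENNReal.le_div_iff_mul_le (Or.inl hT) (Or.inl (by simp)), mul_comm,
    ENNReal.mul_le_mul_iff_left hs₀ hs] at hcover
  exact (Nat.le_succ N).trans (mod_cast hcover)

lemma Set.OrdConnected.subset_Icc_of_mem {α : Type*} [LinearOrder α] {s : Set α}
    (hs : s.OrdConnected) {u v z : α}
    (hz : z ∈ s) (hzuv : z ∈ Icc u v) (hu : u ∉ s) (hv : v ∉ s) : s ⊆ Icc u v := by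
  intro y hy
  by_contra hyuv
  rcases not_and_or.1 hyuv with hyu | hyv
  · exact hu (hs.out hy hz ⟨(not_le.1 hyu).le, hzuv.1⟩)
  · exact hv (hs.out hz hy ⟨hzuv.2, (not_le.1 hyv).le⟩)

lemma ncard_image_Ioo_le_ncard_Jcells_add_two {q : ℕ → ℝ → ℝ} {n : ℕ}
    (hfin : (range (q n)).Finite) (hord : ∀ a ∈ range (q n), (q n ⁻¹' {a}).OrdConnected)
    (u v : ℝ) : (q n '' Ioo u v).ncard ≤ (Jcells q (Icc u v) n).ncard + 2 := by
  have hsub : q n '' Ioo u v ⊆ Jcells q (Icc u v) n ∪ {q n u, q n v} := by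
    rintro _ ⟨z, hz, rfl⟩
    by_cases hend : q n z = q n u ∨ q n z = q n v
    · exact Or.inr hend
    · obtain ⟨hzu, hzv⟩ := not_or.1 hend
      exact Or.inl ⟨mem_range_self z, (hord _ (mem_range_self z)).subset_Icc_of_mem rfl
        (Ioo_subset_Icc_self hz) (fun h => hzu h.symm) (fun h => hzv h.symm)⟩
  calc (q n '' Ioo u v).ncard ≤ (Jcells q (Icc u v) n ∪ {q n u, q n v}).ncard :=
        ncard_le_ncard hsub ((hfin.subset (sep_subset _ _)).union (toFinite _))
    _ ≤ (Jcells q (Icc u v) n).ncard + ({q n u, q n v} : Set ℝ).ncard := ncard_union_le _ _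
    _ ≤ (Jcells q (Icc u v) n).ncard + 2 := by
        gcongr
        exact (ncard_insert_le _ _).trans (by simp)

theorem gersho_stmt_12_general (μ : Measure ℝ) [IsProbabilityMeasure μ]
    (r : ℝ) (hr : 1 < r) (hmom : Integrable (fun x => |x| ^ r) μ)
    (h : ℝ → ℝ)
    (hμ : μ = volume.withDensity (fun x => ENNReal.ofReal (h x)))
    (hwu : WeaklyUnimodal h)
    (q : ℕ → ℝ → ℝ) (hq : ∀ n : ℕ, 0 < n → IsGersho μ r n (q n))
    (u v : ℝ) (huv : u < v) (hI : Set.Icc u v ⊆ interior (msupp μ)) :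
    Tendsto (fun n : ℕ => (Jcells q (Set.Icc u v) n).ncard) atTop atTop := by
  have hr₀ : 0 < r := one_pos.trans hr
  have hball : ∀ ε ≠ 0, ∃ ρ > 0, ∀ a, μ (Metric.ball a ρ) ≤ ε := fun ε hε =>
    hμ ▸ exists_pos_forall_withDensity_ball_le hwu.bddAbove_range hε
  have hmass : μ (Ioo u v) ≠ 0 :=
    (interior_subset (hI ⟨by linarith, by linarith⟩) (Ioo u v)
      (Ioo_mem_nhds (by linarith : u < (u + v) / 2) (by linarith))).ne'
  have hcells : Tendsto (fun n => (q n '' Ioo u v).ncard) atTop atTop :=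
    tendsto_ncard_image_atTop hmass (measure_ne_top μ _)
      ((eventually_gt_atTop 0).mono fun n hn => (hq n hn).finite_range)
      fun ε hε => IsGersho.eventually_measure_preimage_le hr₀
        (integrable_abs_sub_rpow hr₀ hmom u).lintegral_lt_top.ne hball hq hε
  refine tendsto_atTop_mono' _ ?_ ((tendsto_sub_atTop_nat 2).comp hcells)
  filter_upwards [eventually_gt_atTop 0] with n hn
  have hcount :=
    ncard_image_Ioo_le_ncard_Jcells_add_two (hq n hn).finite_range (hq n hn).2.2.1 u v
  simp only [Function.comp_apply]
  omega

theorem gersho_stmt_12 (μ : Measure ℝ) [IsProbabilityMeasure μ]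
    (r : ℝ) (hr : 1 < r) (hmom : Integrable (fun x => |x| ^ r) μ)
    (h : ℝ → ℝ) (hh0 : ∀ x, 0 ≤ h x)
    (hμ : μ = volume.withDensity (fun x => ENNReal.ofReal (h x)))
    (hwu : WeaklyUnimodal h)
    (q : ℕ → ℝ → ℝ) (hq : ∀ n : ℕ, 0 < n → IsGersho μ r n (q n))
    (u v : ℝ) (huv : u < v) (hI : Set.Icc u v ⊆ interior (msupp μ)) :
    Tendsto (fun n : ℕ => (Jcells q (Set.Icc u v) n).ncard) atTop atTop :=
  gersho_stmt_12_general μ r hr hmom h hμ hwu q hq u v huv hI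
end
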